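/- Let d be a positive integer. Define Ω_d = ∑_{ρ ∈ R_d} a_{1,ρ₁}⋯a_{d,ρ_d} where a_{i,j} = 2 if 1 ≤ j ≤ d+1-i, a_{i,j} = 1 if d+2-i ≤ j ≤ d+i, and a_{i,j} = 0 otherwise, and R_d is the set of injective sequences (ρ₁,…,ρ_d) with 1 ≤ ρ_i ≤ d+i. Then Ω_d = ∑_{m=0}^{d} C(d,m)·(m+1)^d. -/

import Mathlib

/-!
Every admissible `ρ` meets only the entries `1` and `2 = 1 + 1`, so expanding the product writes
`Ω_d(2)` as a sum, over sets `S` of rows, of the number of injective `ρ` with `ρ i < b_S i`, where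
`b_S i = d - i` for `i ∈ S` (the region of the entries `2`) and `b_S i = d + i + 1` otherwise.
Choosing the values of an injection greedily in increasing order of the bounds counts these as
`∏ i, (b_S i - #{j | b_S j < b_S i})`. With `c = d - #S + 1`, the factor of row `i` is
`c + #(S below i)` for `i ∉ S` and `c - #(rows below i outside S)` for `i ∈ S`, and for every `s`
the sum of these products over all `S` of size `s` is `C(d, s) c ^ d`: by induction on `d`, the
last row contributes `c + s` or `c - (d - s)`, and `(s + 1) C(d, s + 1) = (d - s) C(d, s)`.
Reindexing by `m = d - s` gives the formula.
-/

open Classical in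
/-- The permanent-type sum `Ω_d(x)` of the `d × 2d` matrix `A_{d,x}`
(rows and columns here are 0-indexed: row `i`, column `j` correspond to
row `i+1`, column `j+1` of the paper, so the entry is `x` if `i+j+1 ≤ d`,
`1` if `d ≤ i+j` and `j ≤ d+i`, and `0` otherwise). The sum is over
injective sequences `ρ` with `ρ i ≤ d + i` (0-indexed form of `1 ≤ ρ_i ≤ d+i`). -/
noncomputable def Omega (d : ℕ) (x : ℝ) : ℝ :=
  ∑ ρ ∈ Finset.univ.filter (fun ρ : Fin d → Fin (2 * d) =>
      Function.Injective ρ ∧ ∀ i : Fin d, (ρ i : ℕ) ≤ d + (i : ℕ)),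
    ∏ i : Fin d,
      (if (i : ℕ) + (ρ i : ℕ) < d then x
       else if (ρ i : ℕ) ≤ d + (i : ℕ) then 1 else 0)

open Finset

section BoundedInjections

variable {ι : Type*} [Fintype ι] [DecidableEq ι]

/-- Extended by `0` off `t`, so that the injections on all subsets of `t` live in one type. -/
def boundedInjOn (t : Finset ι) (b : ι → ℕ) : Finset (ι → ℕ) :=
  {f ∈ Fintype.piFinset fun i => if i ∈ t then range (b i) else {0} | Set.InjOn f t}

variable {t : Finset ι} {b : ι → ℕ} {a : ι}

lemma mem_boundedInjOn {f : ι → ℕ} :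
    f ∈ boundedInjOn t b ↔ (∀ i ∈ t, f i < b i) ∧ (∀ i ∉ t, f i = 0) ∧ Set.InjOn f t := by
  simp only [boundedInjOn, mem_filter, Fintype.mem_piFinset]
  constructor
  · rintro ⟨hf, hinj⟩
    exact ⟨fun i hi => by simpa [hi] using hf i, fun i hi => by simpa [hi] using hf i, hinj⟩
  · rintro ⟨hlt, hzero, hinj⟩
    refine ⟨fun i => ?_, hinj⟩
    split_ifs with hi
    · exact mem_range.2 (hlt i hi)
    · exact mem_singleton.2 (hzero i hi)

lemma update_zero_mem_boundedInjOn {f : ι → ℕ} (hf : f ∈ boundedInjOn (insert a t) b)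
    (ha : a ∉ t) : Function.update f a 0 ∈ boundedInjOn t b := by
  rw [mem_boundedInjOn] at hf ⊢
  obtain ⟨hlt, hzero, hinj⟩ := hf
  refine ⟨fun i hi => ?_, fun i hi => ?_, ?_⟩
  · rw [Function.update_of_ne (ne_of_mem_of_not_mem hi ha)]
    exact hlt i (mem_insert_of_mem hi)
  · by_cases hia : i = a
    · simp [hia]
    · rw [Function.update_of_ne hia]
      exact hzero i (by simp [hia, hi])
  · refine (hinj.mono (by simp)).congr fun i hi => ?_
    rw [Function.update_of_ne (ne_of_mem_of_not_mem hi ha)]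

lemma update_mem_boundedInjOn_insert {g : ι → ℕ} (hg : g ∈ boundedInjOn t b) (ha : a ∉ t)
    {v : ℕ} : Function.update g a v ∈ boundedInjOn (insert a t) b ↔ v < b a ∧ v ∉ t.image g := by
  rw [mem_boundedInjOn] at hg ⊢
  obtain ⟨hlt, hzero, hinj⟩ := hg
  have heq : Set.EqOn (Function.update g a v) g t := fun i hi =>
    Function.update_of_ne (ne_of_mem_of_not_mem hi ha) _ _
  rw [forall_mem_insert, coe_insert, Set.injOn_insert (by simpa using ha), heq.injOn_iff,
    heq.image_eq, Function.update_self, ← coe_image, mem_coe]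
  simp only [mem_insert, not_or]
  constructor
  · rintro ⟨⟨hv, -⟩, -, -, hvim⟩
    exact ⟨hv, hvim⟩
  · rintro ⟨hv, hvim⟩
    refine ⟨⟨hv, fun i hi => heq hi ▸ hlt i hi⟩, fun i ⟨hia, hit⟩ => ?_, hinj, hvim⟩
    rw [Function.update_of_ne hia, hzero i hit]

lemma card_boundedInjOn_insert (ha : a ∉ t) (hmax : ∀ x ∈ t, b x ≤ b a) :
    #(boundedInjOn (insert a t) b) = #(boundedInjOn t b) * (b a - #t) := by
  rw [card_eq_sum_card_fiberwise fun f hf => update_zero_mem_boundedInjOn hf ha]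
  refine sum_const_nat fun g hg => ?_
  obtain ⟨hglt, hgzero, hginj⟩ := mem_boundedInjOn.1 hg
  have hfiber : {f ∈ boundedInjOn (insert a t) b | Function.update f a 0 = g} =
      (range (b a) \ t.image g).image (Function.update g a) := by
    ext f
    rw [mem_filter, mem_image]
    constructor
    · rintro ⟨hf, rfl⟩
      refine ⟨f a, ?_, by simp⟩
      rwa [mem_sdiff, mem_range, ← update_mem_boundedInjOn_insert hg ha, Function.update_idem,
        Function.update_eq_self]
    · rintro ⟨v, hv, rfl⟩
      rw [mem_sdiff, mem_range] at hv
      refine ⟨(update_mem_boundedInjOn_insert hg ha).2 hv, ?_⟩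
      rw [Function.update_idem, ← hgzero a ha, Function.update_eq_self]
  have himage : t.image g ⊆ range (b a) := by
    intro v hv
    obtain ⟨j, hj, rfl⟩ := mem_image.1 hv
    exact mem_range.2 ((hglt j hj).trans_le (hmax j hj))
  rw [hfiber, card_image_of_injective _ (Function.update_injective g a),
    card_sdiff_of_subset himage, card_range, card_image_of_injOn hginj]

theorem card_boundedInjOn (hb : Set.InjOn b t) :
    #(boundedInjOn t b) = ∏ i ∈ t, (b i - #{j ∈ t | b j < b i}) := by
  induction t using Finset.induction_on_max_value b with
  | empty => simp [boundedInjOn]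
  | insert a t ha hmax ih =>
    have hlt : ∀ x ∈ t, b x < b a := fun x hx =>
      (hmax x hx).lt_of_ne fun h => ne_of_mem_of_not_mem hx ha (hb (by simp [hx]) (by simp) h)
    have hrank_a : {j ∈ insert a t | b j < b a} = t := by
      rw [filter_insert, if_neg (lt_irrefl _), filter_true_of_mem hlt]
    have hrank : ∀ i ∈ t, {j ∈ insert a t | b j < b i} = {j ∈ t | b j < b i} := fun i hi => by
      rw [filter_insert, if_neg (hmax i hi).not_gt]
    rw [card_boundedInjOn_insert ha hmax, ih (hb.mono (by simp)), prod_insert ha, hrank_a,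
      mul_comm]
    exact congrArg _ (prod_congr rfl fun i hi => by rw [hrank i hi])

end BoundedInjections

section InjectionsBelow

variable {n m : ℕ} {b : Fin n → ℕ}

def injectionsBelow (m : ℕ) (b : Fin n → ℕ) : Finset (Fin n → Fin m) :=
  {ρ | Function.Injective ρ ∧ ∀ i, (ρ i : ℕ) < b i}

lemma card_injectionsBelow_eq_card_boundedInjOn (hb : ∀ i, b i ≤ m) :
    #(injectionsBelow m b) = #(boundedInjOn univ b) := by
  refine card_bij (fun ρ _ i => ρ i) (fun ρ hρ => ?_) (fun ρ _ ρ' _ h => ?_) (fun f hf => ?_)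
  · obtain ⟨hinj, hlt⟩ := (mem_filter.1 hρ).2
    exact mem_boundedInjOn.2 ⟨fun i _ => hlt i, by simp, (Fin.val_injective.comp hinj).injOn⟩
  · exact funext fun i => Fin.ext (congrFun h i)
  · obtain ⟨hlt, -, hinj⟩ := mem_boundedInjOn.1 hf
    refine ⟨fun i => ⟨f i, (hlt i (mem_univ i)).trans_le (hb i)⟩,
      mem_filter.2 ⟨mem_univ _, ?_, fun i => hlt i (mem_univ i)⟩, rfl⟩
    exact fun i j h => Set.injOn_univ.1 (by simpa using hinj) (congrArg Fin.val h :)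

theorem card_injectionsBelow (hb : ∀ i, b i ≤ m) (hinj : Function.Injective b) :
    #(injectionsBelow m b) = ∏ i, (b i - #{j | b j < b i}) := by
  rw [card_injectionsBelow_eq_card_boundedInjOn hb, card_boundedInjOn hinj.injOn]

end InjectionsBelow

section RankWeight

variable {R : Type*} [CommRing R] (c : R) {T : Finset ℕ} {n : ℕ}

def rankWeight (T : Finset ℕ) (i : ℕ) : R :=
  if i ∈ T then c - (i - #(T ∩ range i)) else c + #(T ∩ range i)

lemma rankWeight_insert_of_lt {i : ℕ} (hi : i < n) :
    rankWeight c (insert n T) i = rankWeight c T i := by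
  simp only [rankWeight, mem_insert, hi.ne, false_or,
    insert_inter_of_notMem (notMem_range_self.imp (range_subset_range.2 hi.le ·))]

lemma rankWeight_of_subset_range (hT : T ⊆ range n) : rankWeight c T n = c + #T := by
  rw [rankWeight, if_neg fun h => notMem_range_self (hT h), inter_eq_left.2 hT]

lemma rankWeight_insert_self (hT : T ⊆ range n) :
    rankWeight c (insert n T) n = c - (n - #T) := by
  rw [rankWeight, if_pos (mem_insert_self n T), insert_inter_of_notMem notMem_range_self,
    inter_eq_left.2 hT]

lemma cast_choose_succ_mul (n s : ℕ) :
    (n.choose (s + 1) : R) * (s + 1) = n.choose s * (n - s) := by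
  rcases le_or_gt s n with h | h
  · have := congrArg (Nat.cast (R := R)) (Nat.choose_succ_right_eq n s)
    push_cast [Nat.cast_sub h] at this
    exact this
  · simp [Nat.choose_eq_zero_of_lt h, Nat.choose_eq_zero_of_lt (h.trans (Nat.lt_succ_self s))]

theorem sum_powersetCard_prod_rankWeight (s : ℕ) :
    ∑ T ∈ powersetCard s (range n), ∏ i ∈ range n, rankWeight c T i = n.choose s * c ^ n := by
  induction n generalizing s with
  | zero => cases s <;> simp
  | succ n ih =>
    cases s with
    | zero => simp [rankWeight, pow_succ]
    | succ s =>
      have hn : n ∉ range n := notMem_range_self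
      have hdisj : Disjoint (powersetCard (s + 1) (range n))
          ((powersetCard s (range n)).image (insert n)) := by
        simp only [disjoint_left, mem_powersetCard, mem_image, not_exists, not_and]
        rintro _ ⟨hT, -⟩ T - rfl
        exact hn (hT (mem_insert_self n T))
      have hinj : Set.InjOn (insert n) (powersetCard s (range n) : Set (Finset ℕ)) :=
        fun T hT T' hT' h => by
          rw [← erase_insert fun h => hn ((mem_powersetCard.1 hT).1 h),
            ← erase_insert fun h => hn ((mem_powersetCard.1 hT').1 h), h]
      have hwithout : ∀ T ∈ powersetCard (s + 1) (range n),
          ∏ i ∈ insert n (range n), rankWeight c T i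
            = (c + (s + 1)) * ∏ i ∈ range n, rankWeight c T i := fun T hT => by
        rw [mem_powersetCard] at hT
        rw [prod_insert hn, rankWeight_of_subset_range c hT.1, hT.2, Nat.cast_succ]
      have hwith : ∀ T ∈ powersetCard s (range n),
          ∏ i ∈ insert n (range n), rankWeight c (insert n T) i
            = (c - (n - s)) * ∏ i ∈ range n, rankWeight c T i := fun T hT => by
        rw [mem_powersetCard] at hT
        rw [prod_insert hn, rankWeight_insert_self c hT.1, hT.2,
          prod_congr rfl fun i hi => rankWeight_insert_of_lt c (mem_range.1 hi)]
      rw [range_add_one, powersetCard_succ_insert hn, sum_union hdisj, sum_image hinj,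
        sum_congr rfl hwithout, sum_congr rfl hwith, ← mul_sum, ← mul_sum, ih, ih,
        Nat.choose_succ_succ, Nat.cast_add]
      linear_combination c ^ n * cast_choose_succ_mul (R := R) n s

end RankWeight

def rowBound (d : ℕ) (S : Finset (Fin d)) (i : Fin d) : ℕ :=
  if i ∈ S then d - i else d + i + 1

section RowBound

variable {d : ℕ} {S : Finset (Fin d)} {i : Fin d}

lemma rowBound_le (S : Finset (Fin d)) (i : Fin d) : rowBound d S i ≤ 2 * d := by
  have := i.isLt
  unfold rowBound
  split_ifs <;> omega

lemma rowBound_injective (S : Finset (Fin d)) : Function.Injective (rowBound d S) := by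
  intro i j h
  have := i.isLt
  have := j.isLt
  unfold rowBound at h
  split_ifs at h <;> omega

lemma filter_rowBound_lt_of_mem (hi : i ∈ S) :
    ({j | rowBound d S j < rowBound d S i} : Finset (Fin d)) = S ∩ Ioi i := by
  ext j
  by_cases hj : j ∈ S <;> simp [rowBound, hi, hj] <;> omega

lemma filter_rowBound_lt_of_notMem (hi : i ∉ S) :
    ({j | rowBound d S j < rowBound d S i} : Finset (Fin d)) = S ∪ Iio i := by
  ext j
  by_cases hj : j ∈ S <;> simp [rowBound, hi, hj]
  omega

lemma card_inter_Iio_add_card_inter_Ioi (hi : i ∈ S) :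
    #(S ∩ Iio i) + #(S ∩ Ioi i) + 1 = #S := by
  have hsplit : S \ Iio i = insert i (S ∩ Ioi i) := by
    ext j
    simp only [mem_sdiff, mem_Iio, mem_insert, mem_inter, mem_Ioi, not_lt]
    constructor
    · rintro ⟨hj, hij⟩
      exact hij.eq_or_lt.imp Eq.symm fun h => ⟨hj, h⟩
    · rintro (rfl | ⟨hj, hij⟩)
      · exact ⟨hi, le_rfl⟩
      · exact ⟨hj, hij.le⟩
  have := card_sdiff_add_card_inter S (Iio i)
  rw [hsplit, card_insert_of_notMem (by simp)] at this
  omega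

lemma cast_rowBound_sub_card {R : Type*} [CommRing R] (S : Finset (Fin d)) (i : Fin d) :
    ((rowBound d S i - #{j | rowBound d S j < rowBound d S i} : ℕ) : R) =
      rankWeight ((d : R) - #S + 1) (S.map Fin.valEmbedding) i := by
  have hbelow : #(S.map Fin.valEmbedding ∩ range i) = #(S ∩ Iio i) := by
    rw [← Nat.Iio_eq_range, ← Fin.map_valEmbedding_Iio, ← map_inter, card_map]
  have hmem : (i : ℕ) ∈ S.map Fin.valEmbedding ↔ i ∈ S := mem_map' Fin.valEmbedding
  rw [rankWeight, hbelow]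
  by_cases hi : i ∈ S
  · have habove : #(S ∩ Ioi i) ≤ d - 1 - i :=
      Fin.card_Ioi i ▸ card_le_card inter_subset_right
    have hpart := card_inter_Iio_add_card_inter_Ioi hi
    have := i.isLt
    rw [if_pos (hmem.2 hi), filter_rowBound_lt_of_mem hi, rowBound, if_pos hi,
      Nat.cast_sub (by omega), Nat.cast_sub (by omega), ← hpart]
    push_cast
    ring
  · have hunion := card_union_add_card_inter S (Iio i)
    rw [Fin.card_Iio] at hunion
    have hle : #(S ∪ Iio i) ≤ d := by simpa using card_le_univ (S ∪ Iio i)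
    rw [if_neg (mt hmem.1 hi), filter_rowBound_lt_of_notMem hi, rowBound, if_neg hi,
      Nat.cast_sub (by omega)]
    have := congrArg (Nat.cast (R := R)) hunion
    push_cast at this ⊢
    linear_combination -this

lemma cast_card_injectionsBelow_rowBound (S : Finset (Fin d)) :
    (#(injectionsBelow (2 * d) (rowBound d S)) : ℝ) =
      ∏ i ∈ range d, rankWeight ((d : ℝ) - #S + 1) (S.map Fin.valEmbedding) i := by
  rw [card_injectionsBelow (rowBound_le S) (rowBound_injective S), Nat.cast_prod,
    ← Fin.prod_univ_eq_prod_range]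
  exact prod_congr rfl fun i _ => cast_rowBound_sub_card S i

lemma sum_powersetCard_card_injectionsBelow_rowBound (s : ℕ) :
    ∑ S ∈ powersetCard s (univ : Finset (Fin d)), (#(injectionsBelow (2 * d) (rowBound d S)) : ℝ) =
      d.choose s * ((d : ℝ) - s + 1) ^ d := by
  have hrange : powersetCard s (range d) =
      (powersetCard s (univ : Finset (Fin d))).map (mapEmbedding Fin.valEmbedding).toEmbedding := by
    rw [← Nat.Iio_eq_range, ← Fin.map_valEmbedding_univ, powersetCard_map]
  rw [← sum_powersetCard_prod_rankWeight, hrange, sum_map]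
  refine sum_congr rfl fun S hS => ?_
  rw [cast_card_injectionsBelow_rowBound, (mem_powersetCard.1 hS).2]
  rfl

end RowBound

lemma Omega_two_eq_sum_card_injectionsBelow (d : ℕ) :
    Omega d 2 = ∑ S ∈ (univ : Finset (Fin d)).powerset,
      (#(injectionsBelow (2 * d) (rowBound d S)) : ℝ) := by
  set A : Finset (Fin d → Fin (2 * d)) :=
    {ρ | Function.Injective ρ ∧ ∀ i : Fin d, (ρ i : ℕ) ≤ d + i} with hA
  have hfactor : ∀ ρ ∈ A,
      ∏ i : Fin d, (if (i : ℕ) + ρ i < d then (2 : ℝ) else if (ρ i : ℕ) ≤ d + i then 1 else 0) =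
        ∏ i : Fin d, (1 + if (i : ℕ) + ρ i < d then 1 else 0) := fun ρ hρ => by
    refine prod_congr rfl fun i _ => ?_
    have := (mem_filter.1 hρ).2.2 i
    split_ifs <;> norm_num
  have hfilter : ∀ S : Finset (Fin d),
      injectionsBelow (2 * d) (rowBound d S) = {ρ ∈ A | ∀ i ∈ S, (i : ℕ) + ρ i < d} := fun S => by
    ext ρ
    simp only [injectionsBelow, hA, mem_filter, mem_univ, true_and, and_assoc]
    refine and_congr_right fun _ => ⟨fun h => ⟨fun i => ?_, fun i hi => ?_⟩, fun h i => ?_⟩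
    · have := h i
      unfold rowBound at this
      split_ifs at this <;> omega
    · have := h i
      rw [rowBound, if_pos hi] at this
      omega
    · unfold rowBound
      split_ifs with hi
      · have := h.2 i hi
        omega
      · have := h.1 i
        omega
  rw [Omega, ← hA, sum_congr rfl hfactor]
  simp_rw [prod_one_add]
  rw [sum_comm]
  refine sum_congr rfl fun S _ => ?_
  rw [hfilter, natCast_card_filter]
  exact sum_congr rfl fun ρ _ => by convert prod_boole

theorem kloeve_Omega_two_general (d : ℕ) :
    Omega d 2 = ∑ m ∈ Finset.range (d + 1),
      (Nat.choose d m : ℝ) * ((m : ℝ) + 1) ^ d := by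
  rw [Omega_two_eq_sum_card_injectionsBelow, sum_powerset, card_univ, Fintype.card_fin,
    sum_congr rfl fun s _ => sum_powersetCard_card_injectionsBelow_rowBound s,
    ← sum_range_reflect]
  refine sum_congr rfl fun m hm => ?_
  have hm : m ≤ d := Nat.lt_succ_iff.1 (mem_range.1 hm)
  rw [add_tsub_cancel_right, Nat.choose_symm hm, Nat.cast_sub hm]
  ring

theorem kloeve_Omega_two (d : ℕ) (hd : 0 < d) :
    Omega d 2 = ∑ m ∈ Finset.range (d + 1),
      (Nat.choose d m : ℝ) * ((m : ℝ) + 1) ^ d :=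
  kloeve_Omega_two_general d
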